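/- arXiv:2207.02822 — 2 statements merged into one kernel-verified Lean document; each statement's English description precedes it below -/
import Mathlib

section
/- Combining magic wands: for qualitative expectations φ, ψ and a one-bounded expectation X, one has φ -⋆ (ψ -⋆ X) = (φ ⋆ ψ) -⋆ X. -/
open ENNReal

abbrev Heap := ℤ → Option ℤ
abbrev Stack := String → ℤ
abbrev PState := Stack × Heap
abbrev Exp := PState → ℝ≥0∞

/-- Heaps are disjoint if their domains are disjoint. -/
def HDisj (h₁ h₂ : Heap) : Prop := ∀ l, h₁ l = none ∨ h₂ l = none

/-- Disjoint union of heaps. -/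
def HJoin (h₁ h₂ : Heap) : Heap := fun l => (h₁ l).orElse (fun _ => h₂ l)

/-- Separating multiplication: (X ⋆ Y)(s,h) = sup { X(s,h₁)·Y(s,h₂) | h₁ ⋆ h₂ = h }. -/
noncomputable def sepMul (X Y : Exp) : Exp := fun σ =>
  ⨆ h₁, ⨆ h₂, ⨆ (_ : HDisj h₁ h₂ ∧ HJoin h₁ h₂ = σ.2), X (σ.1, h₁) * Y (σ.1, h₂)

/-- One-bounded expectations take values in [0,1]. -/
def OneBounded (X : Exp) : Prop := ∀ σ, X σ ≤ 1

/-- Qualitative expectations take values in {0,1}. -/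
def Qualitative (φ : Exp) : Prop := ∀ σ, φ σ = 0 ∨ φ σ = 1

/-- Guarded magic wand: (φ -⋆ X)(s,h) = inf { X(s, h ⋆ h') | φ(s,h') = 1, h' ⊥ h },
with the infimum of the empty set being 1 (for one-bounded X). -/
noncomputable def wand (φ X : Exp) : Exp := fun σ =>
  (⨅ h' : {h' : Heap // φ (σ.1, h') = 1 ∧ HDisj σ.2 h'}, X (σ.1, HJoin σ.2 h'.1)) ⊓ 1

/-! Since φ and ψ are qualitative, `(φ ⋆ ψ)(s, h') = 1` exactly when `h'` splits into disjoint
`h₁ ⋆ h₂` with `φ(s, h₁) = ψ(s, h₂) = 1`. Both wands are characterised by their lower bounds `Y ≤ 1`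
with `Y ≤ X(s, ·)` on the admissible extensions of `h`, and extending `h` by `h₁` and then by `h₂`
reaches the same heaps, under the same disjointness conditions, as extending it by `h₁ ⋆ h₂`. -/

lemma hJoin_eq_none_iff {a b : Heap} {l : ℤ} : HJoin a b l = none ↔ a l = none ∧ b l = none := by
  simp only [HJoin, Option.orElse]
  cases a l <;> simp

lemma hJoin_assoc (a b c : Heap) : HJoin (HJoin a b) c = HJoin a (HJoin b c) := by
  funext l
  simp only [HJoin, Option.orElse]
  cases a l <;> rfl

lemma hDisj_hJoin_right_iff {h a b : Heap} : HDisj h (HJoin a b) ↔ HDisj h a ∧ HDisj h b := by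
  simp only [HDisj, hJoin_eq_none_iff, ← forall_and, or_and_left]

lemma hDisj_hJoin_left_iff {a b h : Heap} : HDisj (HJoin a b) h ↔ HDisj a h ∧ HDisj b h := by
  simp only [HDisj, hJoin_eq_none_iff, ← forall_and, and_or_right]

lemma Qualitative.oneBounded {φ : Exp} (hφ : Qualitative φ) : OneBounded φ := fun σ =>
  (hφ σ).elim (fun h => h ▸ zero_le_one) le_of_eq

lemma mul_le_sepMul (X Y : Exp) (s : Stack) {h₁ h₂ : Heap} (hd : HDisj h₁ h₂) :
    X (s, h₁) * Y (s, h₂) ≤ sepMul X Y (s, HJoin h₁ h₂) :=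
  le_iSup_of_le h₁ <| le_iSup_of_le h₂ <| le_iSup_of_le ⟨hd, rfl⟩ le_rfl

lemma sepMul_le_one {X Y : Exp} (hX : OneBounded X) (hY : OneBounded Y) : OneBounded (sepMul X Y) :=
  fun _ => iSup_le fun _ => iSup_le fun _ => iSup_le fun _ => mul_le_one' (hX _) (hY _)

lemma sepMul_eq_one_iff {φ ψ : Exp} (hφ : Qualitative φ) (hψ : Qualitative ψ) (s : Stack)
    (h : Heap) : sepMul φ ψ (s, h) = 1 ↔
      ∃ h₁ h₂, HDisj h₁ h₂ ∧ HJoin h₁ h₂ = h ∧ φ (s, h₁) = 1 ∧ ψ (s, h₂) = 1 := by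
  constructor
  · intro h1
    by_contra! hsplit
    have : sepMul φ ψ (s, h) = 0 := by
      simp only [sepMul, ENNReal.iSup_eq_zero, mul_eq_zero]
      rintro h₁ h₂ ⟨hd, rfl⟩
      exact (hφ _).imp_right fun e1 => (hψ _).resolve_right (hsplit h₁ h₂ hd rfl e1)
    simp [this] at h1
  · rintro ⟨h₁, h₂, hd, rfl, e1, e2⟩
    refine le_antisymm (sepMul_le_one hφ.oneBounded hψ.oneBounded _) ?_
    simpa [e1, e2] using mul_le_sepMul φ ψ s hd

lemma le_wand_iff {φ X : Exp} {s : Stack} {h : Heap} {Y : ℝ≥0∞} :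
    Y ≤ wand φ X (s, h) ↔
      Y ≤ 1 ∧ ∀ h', φ (s, h') = 1 → HDisj h h' → Y ≤ X (s, HJoin h h') := by
  simp only [wand, le_inf_iff, le_iInf_iff, Subtype.forall, and_imp]
  exact and_comm

theorem wand_wand_eq_sepMul_wand_general (φ ψ X : Exp)
    (hφ : Qualitative φ) (hψ : Qualitative ψ) :
    wand φ (wand ψ X) = wand (sepMul φ ψ) X := by
  funext ⟨s, h⟩
  refine eq_of_forall_le_iff fun Y => ?_
  simp only [le_wand_iff, sepMul_eq_one_iff hφ hψ, hJoin_assoc, hDisj_hJoin_left_iff,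
    forall_exists_index, and_imp]
  refine and_congr_right fun hY => ⟨?_, ?_⟩
  · rintro H _ h₁ h₂ hd₁₂ rfl e₁ e₂ hd
    obtain ⟨hd₁, hd₂⟩ := hDisj_hJoin_right_iff.1 hd
    exact (H h₁ e₁ hd₁).2 h₂ e₂ hd₂ hd₁₂
  · intro H h₁ e₁ hd₁
    exact ⟨hY, fun h₂ e₂ hd₂ hd₁₂ => H _ h₁ h₂ hd₁₂ rfl e₁ e₂ (hDisj_hJoin_right_iff.2 ⟨hd₁, hd₂⟩)⟩

theorem wand_wand_eq_sepMul_wand (φ ψ X : Exp)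
    (hφ : Qualitative φ) (hψ : Qualitative ψ) (hX : OneBounded X) :
    wand φ (wand ψ X) = wand (sepMul φ ψ) X :=
  wand_wand_eq_sepMul_wand_general φ ψ X hφ hψ
end

section
/- For a precise one-bounded expectation X, separating multiplication with X distributes over pointwise addition: X ⋆ (Y + Z) = (X ⋆ Y) + (X ⋆ Z). -/
open ENNReal

/-- An expectation is precise if for every state at most one subheap of the heap
gives it a nonzero value. -/
def Precise (X : Exp) : Prop := ∀ (s : Stack) (h : Heap),
  Set.Subsingleton
    {h1 : Heap | (∃ h2, HDisj h1 h2 ∧ HJoin h1 h2 = h) ∧ 0 < X (s, h1)}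

/-!
For precise `X`, at most one split `h = h₁ ⋆ h₂` has `X (s, h₁) > 0`, so the supremum defining
`(X ⋆ W) (s, h)` collapses to the single product `X (s, h₁) * W (s, h₂)`, or to `0` when there is
no such split. Either way it is linear in `W`.
-/

lemma hJoin_left_cancel {h₁ h₂ h₂' : Heap} (d : HDisj h₁ h₂) (d' : HDisj h₁ h₂')
    (e : HJoin h₁ h₂ = HJoin h₁ h₂') : h₂ = h₂' := by
  funext l
  have hl := congrFun e l
  rcases d l with h | h <;> rcases d' l with h' | h' <;>
    simp_all [HJoin, Option.orElse]

lemma le_sepMul {X W : Exp} {s : Stack} {h₁ h₂ : Heap} (d : HDisj h₁ h₂) :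
    X (s, h₁) * W (s, h₂) ≤ sepMul X W (s, HJoin h₁ h₂) :=
  le_iSup_of_le h₁ <| le_iSup_of_le h₂ <| le_iSup_of_le ⟨d, rfl⟩ le_rfl

lemma sepMul_eq_zero {X : Exp} {s : Stack} {h : Heap}
    (h0 : ∀ h₁ h₂, HDisj h₁ h₂ → HJoin h₁ h₂ = h → X (s, h₁) = 0) (W : Exp) :
    sepMul X W (s, h) = 0 :=
  nonpos_iff_eq_zero.1 <| iSup_le fun h₁ => iSup_le fun h₂ => iSup_le fun hc => by
    simp [h0 h₁ h₂ hc.1 hc.2]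

lemma Precise.sepMul_eq {X : Exp} (hX : Precise X) {s : Stack} {h₁ h₂ : Heap}
    (d : HDisj h₁ h₂) (hpos : 0 < X (s, h₁)) (W : Exp) :
    sepMul X W (s, HJoin h₁ h₂) = X (s, h₁) * W (s, h₂) := by
  refine le_antisymm (iSup_le fun h₁' => iSup_le fun h₂' => iSup_le fun ⟨d', e'⟩ => ?_)
    (le_sepMul d)
  rcases eq_zero_or_pos (X (s, h₁')) with h0 | hpos'
  · simp [h0]
  · obtain rfl : h₁' = h₁ := hX s _ ⟨⟨h₂', d', e'⟩, hpos'⟩ ⟨⟨h₂, d, rfl⟩, hpos⟩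
    obtain rfl : h₂' = h₂ := hJoin_left_cancel d' d e'
    exact le_rfl

theorem precise_sepMul_add_general (X Y Z : Exp)
    (hprec : Precise X) :
    sepMul X (fun σ => Y σ + Z σ) =
      fun σ => sepMul X Y σ + sepMul X Z σ := by
  funext ⟨s, h⟩
  by_cases hsplit : ∃ h₁ h₂, HDisj h₁ h₂ ∧ HJoin h₁ h₂ = h ∧ 0 < X (s, h₁)
  · obtain ⟨h₁, h₂, d, rfl, hpos⟩ := hsplit
    simp only [hprec.sepMul_eq d hpos, mul_add]
  · simp only [not_exists, not_and, not_lt, nonpos_iff_eq_zero] at hsplit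
    simp only [sepMul_eq_zero hsplit, add_zero]

theorem precise_sepMul_add (X Y Z : Exp)
    (hX : OneBounded X) (hY : OneBounded Y) (hZ : OneBounded Z)
    (hprec : Precise X) :
    sepMul X (fun σ => Y σ + Z σ) =
      fun σ => sepMul X Y σ + sepMul X Z σ :=
  precise_sepMul_add_general X Y Z hprec
end
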